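/- arXiv:2407.08226 — 4 statements merged into one kernel-verified Lean document; each statement's English description precedes it below -/
import Mathlib

section
/- Let B be an N×N complex matrix all of whose eigenvalues have real part at least δ > 0. Then for every t ≥ 0, the operator norm of e^{-tB} is bounded by C·(1 + ‖B/δ‖^N)·e^{-δt/2}, where C depends only on N and the chosen norm. -/
/-!
Over `ℂ` the characteristic polynomial of `B` splits, so by Cayley–Hamilton
`(B - μ₁) ⋯ (B - μ_N) = 0` with every `μⱼ` in the spectrum, hence `‖B - μⱼ‖ ≤ 2‖B‖`.
Peeling off one factor at a time with Duhamel's formula gives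
`‖e^{-tB}‖ ≤ e^{-δt} (1 + 2‖B‖t)^N`; half of the decay rate then absorbs the polynomial factor,
at the price of a constant times `1 + ‖B/δ‖^N`.
-/

attribute [local instance] Matrix.linftyOpNormedRing Matrix.linftyOpNormedAlgebra

open NormedSpace Polynomial
open scoped Nat

section BanachAlgebra

variable {𝔸 : Type*} [NormedRing 𝔸] [NormedAlgebra ℂ 𝔸] [CompleteSpace 𝔸]

theorem hasDerivAt_exp_neg_smul_mul (a x : 𝔸) (s : ℝ) :
    HasDerivAt (fun u : ℝ => exp ((-u) • a) * x) (-(a * (exp ((-s) • a) * x))) s := by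
  have h := (hasDerivAt_exp_smul_const' a (-s)).scomp s (hasDerivAt_neg s)
  simpa [Function.comp_def, mul_assoc] using h.mul_const x

theorem hasDerivAt_cexp_smul_exp_neg_smul_mul (a x : 𝔸) (μ : ℂ) (s : ℝ) :
    HasDerivAt (fun u : ℝ => Complex.exp (u * μ) • (exp ((-u) • a) * x))
      (-(Complex.exp (s * μ) • (exp ((-s) • a) * ((a - algebraMap ℂ 𝔸 μ) * x)))) s := by
  have hc : HasDerivAt (fun u : ℝ => Complex.exp (u * μ)) (Complex.exp (s * μ) * μ) s := by
    simpa using ((Complex.ofRealCLM.hasDerivAt (x := s)).mul_const μ).cexp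
  refine (hc.smul (hasDerivAt_exp_neg_smul_mul a x s)).congr_deriv ?_
  have hcomm : a * exp ((-s) • a) = exp ((-s) • a) * a :=
    ((Commute.refl a).smul_right (-s)).exp_right
  rw [← mul_assoc, hcomm, sub_mul, mul_sub, Algebra.algebraMap_eq_smul_one, smul_mul_assoc,
    one_mul, mul_smul_comm, mul_assoc]
  module

theorem Complex.norm_exp_ofReal_mul (s : ℝ) (μ : ℂ) :
    ‖Complex.exp (s * μ)‖ = Real.exp (s * μ.re) := by
  simp [Complex.norm_exp]

theorem hasDerivAt_exp_mul_mul_one_add_mul_pow (c M : ℝ) (k : ℕ) (u : ℝ) :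
    HasDerivAt (fun u => Real.exp (c * u) * (1 + M * u) ^ (k + 1))
      (c * (Real.exp (c * u) * (1 + M * u) ^ (k + 1)) +
        Real.exp (c * u) * ((k + 1) * M * (1 + M * u) ^ k)) u := by
  have hexp : HasDerivAt (fun u => Real.exp (c * u)) (Real.exp (c * u) * c) u := by
    simpa using ((hasDerivAt_id' u).const_mul c).exp
  have hpow : HasDerivAt (fun u => (1 + M * u) ^ (k + 1)) ((k + 1) * (1 + M * u) ^ k * M) u := by
    simpa using (((hasDerivAt_id' u).const_mul M).const_add 1).fun_pow (k + 1)
  exact (hexp.mul hpow).congr_deriv (by ring)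

/-- Duhamel's formula, run as a differential inequality for `u ↦ e^{uμ} e^{-ua} x`. -/
theorem norm_exp_neg_smul_mul_le_of_norm_exp_neg_smul_mul_sub_le {a x : 𝔸} {μ : ℂ} {δ M : ℝ}
    {k : ℕ} (hμ : δ ≤ μ.re) (hM : ‖a - algebraMap ℂ 𝔸 μ‖ ≤ M)
    (h : ∀ s, 0 ≤ s → ‖exp ((-s) • a) * ((a - algebraMap ℂ 𝔸 μ) * x)‖ ≤
      ‖(a - algebraMap ℂ 𝔸 μ) * x‖ * Real.exp (-δ * s) * (1 + M * s) ^ k)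
    {t : ℝ} (ht : 0 ≤ t) :
    ‖exp ((-t) • a) * x‖ ≤ ‖x‖ * Real.exp (-δ * t) * (1 + M * t) ^ (k + 1) := by
  have hM0 : 0 ≤ M := (norm_nonneg _).trans hM
  set c := μ.re - δ with hc_def
  have hexp (u : ℝ) : Real.exp (u * μ.re) * Real.exp (-δ * u) = Real.exp (c * u) := by
    rw [← Real.exp_add, hc_def]; ring_nf
  have hB (u : ℝ) := (hasDerivAt_exp_mul_mul_one_add_mul_pow c M k u).const_mul ‖x‖
  have hbound (u : ℝ) (hu : u ∈ Set.Ico 0 t) :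
      ‖-(Complex.exp (u * μ) • (exp ((-u) • a) * ((a - algebraMap ℂ 𝔸 μ) * x)))‖ ≤
        ‖x‖ * (c * (Real.exp (c * u) * (1 + M * u) ^ (k + 1)) +
          Real.exp (c * u) * ((k + 1) * M * (1 + M * u) ^ k)) := by
    have hu0 : 0 ≤ u := hu.1
    have hQx : ‖(a - algebraMap ℂ 𝔸 μ) * x‖ ≤ M * ‖x‖ :=
      (norm_mul_le _ _).trans (by gcongr)
    calc _ = Real.exp (u * μ.re) * ‖exp ((-u) • a) * ((a - algebraMap ℂ 𝔸 μ) * x)‖ := by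
          rw [norm_neg, norm_smul, Complex.norm_exp_ofReal_mul]
      _ ≤ Real.exp (u * μ.re) * (M * ‖x‖ * Real.exp (-δ * u) * (1 + M * u) ^ k) := by
          gcongr
          exact (h u hu0).trans (by gcongr)
      _ = ‖x‖ * (Real.exp (c * u) * (1 * M * (1 + M * u) ^ k)) := by
          rw [← hexp]; ring
      _ ≤ _ := by
          have hp : 0 ≤ 1 + M * u := add_nonneg zero_le_one (mul_nonneg hM0 hu0)
          gcongr
          refine le_add_of_nonneg_of_le (by positivity) ?_
          gcongr
          linarith [(Nat.cast_nonneg k : (0 : ℝ) ≤ k)]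
  have key := image_norm_le_of_norm_deriv_right_le_deriv_boundary
    (f := fun u : ℝ => Complex.exp (u * μ) • (exp ((-u) • a) * x))
    (fun u _ => (hasDerivAt_cexp_smul_exp_neg_smul_mul a x μ u).continuousAt.continuousWithinAt)
    (fun u _ => (hasDerivAt_cexp_smul_exp_neg_smul_mul a x μ u).hasDerivWithinAt)
    (by simp) hB hbound (Set.right_mem_Icc.mpr ht)
  rw [norm_smul, Complex.norm_exp_ofReal_mul, ← hexp] at key
  refine le_of_mul_le_mul_left ?_ (Real.exp_pos (t * μ.re))
  linarith

theorem norm_exp_neg_smul_mul_le_of_list_prod_mul_eq_zero {a : 𝔸} {δ M : ℝ} (L : List ℂ)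
    (hre : ∀ μ ∈ L, δ ≤ μ.re) (hM : ∀ μ ∈ L, ‖a - algebraMap ℂ 𝔸 μ‖ ≤ M) {x : 𝔸}
    (hx : (L.map fun μ => a - algebraMap ℂ 𝔸 μ).prod * x = 0) {t : ℝ} (ht : 0 ≤ t) :
    ‖exp ((-t) • a) * x‖ ≤ ‖x‖ * Real.exp (-δ * t) * (1 + M * t) ^ L.length := by
  induction L generalizing x t with
  | nil => simp_all
  | cons μ L ih =>
    have hcomm : Commute (a - algebraMap ℂ 𝔸 μ) (L.map fun μ => a - algebraMap ℂ 𝔸 μ).prod := by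
      refine Commute.list_prod_right _ _ fun y hy => ?_
      obtain ⟨ν, -, rfl⟩ := List.mem_map.mp hy
      exact ((Commute.refl a).sub_right (Algebra.commute_algebraMap_right ν a)).sub_left
        ((Algebra.commute_algebraMap_left μ a).sub_right (Algebra.commute_algebraMap_left μ _))
    refine norm_exp_neg_smul_mul_le_of_norm_exp_neg_smul_mul_sub_le (hre μ (by simp))
      (hM μ (by simp)) (fun s hs => ih (fun ν hν => hre ν (by simp [hν]))
        (fun ν hν => hM ν (by simp [hν])) ?_ hs) ht
    rwa [← mul_assoc, ← hcomm.eq, mul_assoc, ← mul_assoc, ← List.prod_cons]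

end BanachAlgebra

namespace Matrix

variable {n : Type*} [Fintype n] [DecidableEq n]

theorem linfty_opNorm_one_le : ‖(1 : Matrix n n ℂ)‖ ≤ 1 := by
  rw [← diagonal_one, linfty_opNorm_diagonal]
  exact pi_norm_le_iff_of_nonneg zero_le_one |>.mpr fun _ => by simp

theorem norm_sub_algebraMap_le_of_mem_spectrum {B : Matrix n n ℂ} {μ : ℂ}
    (hμ : μ ∈ spectrum ℂ B) : ‖B - algebraMap ℂ _ μ‖ ≤ 2 * ‖B‖ := by
  have hone := linfty_opNorm_one_le (n := n)
  have hμB : ‖μ‖ ≤ ‖B‖ := by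
    have := mem_closedBall_zero_iff.mp (spectrum.subset_closedBall_norm_mul B hμ)
    nlinarith [norm_nonneg B]
  calc ‖B - algebraMap ℂ _ μ‖ ≤ ‖B‖ + ‖μ‖ * ‖(1 : Matrix n n ℂ)‖ := by
        rw [Algebra.algebraMap_eq_smul_one]
        exact (norm_sub_le _ _).trans (by gcongr; exact norm_smul_le _ _)
    _ ≤ 2 * ‖B‖ := by nlinarith [norm_nonneg μ]

theorem exists_spectrum_list_prod_sub_algebraMap_eq_zero (B : Matrix n n ℂ) :
    ∃ L : List ℂ, L.length = Fintype.card n ∧ (∀ μ ∈ L, μ ∈ spectrum ℂ B) ∧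
      (L.map fun μ => B - algebraMap ℂ _ μ).prod = 0 := by
  have hsplit : B.charpoly.Splits := IsAlgClosed.splits _
  refine ⟨B.charpoly.roots.toList, ?_, fun μ hμ => ?_, ?_⟩
  · rw [Multiset.length_toList, splits_iff_card_roots.mp hsplit, charpoly_natDegree_eq_dim]
  · rw [mem_spectrum_iff_isRoot_charpoly]
    exact (mem_roots B.charpoly_monic.ne_zero).mp (Multiset.mem_toList.mp hμ)
  · have h := aeval_self_charpoly B
    rw [hsplit.eq_prod_roots_of_monic B.charpoly_monic, ← Multiset.coe_toList B.charpoly.roots,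
      Multiset.map_coe, Multiset.prod_coe, map_list_prod, List.map_map] at h
    simpa [Function.comp_def] using h

end Matrix

theorem one_add_pow_le_two_pow_mul {x : ℝ} (hx : 0 ≤ x) (n : ℕ) :
    (1 + x) ^ n ≤ 2 ^ n * (1 + x ^ n) := by
  refine (add_pow_le zero_le_one hx n).trans ?_
  rw [one_pow]
  gcongr
  exacts [one_le_two, n.sub_le 1]

theorem one_add_mul_pow_mul_exp_neg_le {x y : ℝ} (hx : 0 ≤ x) (hy : 0 ≤ y) (n : ℕ) :
    (1 + y * x) ^ n * Real.exp (-x) ≤ 4 ^ n * (n ! + 1) * (1 + y ^ n) := by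
  have hxn : (1 + x ^ n) * Real.exp (-x) ≤ n ! + 1 := by
    have hfac := Real.pow_div_factorial_le_exp x hx n
    rw [div_le_iff₀ (by positivity)] at hfac
    have : x ^ n * Real.exp (-x) ≤ n ! := by
      rw [Real.exp_neg, ← div_eq_mul_inv, div_le_iff₀ (Real.exp_pos x)]
      linarith
    linarith [Real.exp_le_one_iff.mpr (neg_nonpos.mpr hx)]
  calc (1 + y * x) ^ n * Real.exp (-x) ≤ ((1 + y) * (1 + x)) ^ n * Real.exp (-x) := by
        gcongr; nlinarith
    _ = (1 + y) ^ n * ((1 + x) ^ n * Real.exp (-x)) := by rw [mul_pow]; ring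
    _ ≤ 2 ^ n * (1 + y ^ n) * (2 ^ n * ((1 + x ^ n) * Real.exp (-x))) := by
        rw [← mul_assoc (2 ^ n)]
        gcongr <;> exact one_add_pow_le_two_pow_mul (by assumption) n
    _ ≤ 2 ^ n * (1 + y ^ n) * (2 ^ n * (n ! + 1)) := by gcongr
    _ = 4 ^ n * (n ! + 1) * (1 + y ^ n) := by
        rw [show (4 : ℝ) ^ n = 2 ^ n * 2 ^ n by rw [← mul_pow]; norm_num]; ring

theorem exp_neg_mul_mul_one_add_pow_le {δ b t : ℝ} (hδ : 0 < δ) (hb : 0 ≤ b) (ht : 0 ≤ t)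
    (n : ℕ) :
    Real.exp (-δ * t) * (1 + 2 * b * t) ^ n ≤
      16 ^ n * (n ! + 1) * (1 + (δ⁻¹ * b) ^ n) * Real.exp (-δ * t / 2) := by
  have h := one_add_mul_pow_mul_exp_neg_le (x := δ * t / 2) (y := 4 * (δ⁻¹ * b))
    (by positivity) (by positivity) n
  have hsplit : Real.exp (-δ * t) = Real.exp (-(δ * t / 2)) * Real.exp (-δ * t / 2) := by
    rw [← Real.exp_add]; ring_nf
  have hlin : 1 + 2 * b * t = 1 + 4 * (δ⁻¹ * b) * (δ * t / 2) := by field_simp; ring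
  have hpow : 1 + (4 * (δ⁻¹ * b)) ^ n ≤ 4 ^ n * (1 + (δ⁻¹ * b) ^ n) := by
    rw [mul_pow, mul_add, mul_one]
    gcongr
    exact one_le_pow₀ (by norm_num)
  calc Real.exp (-δ * t) * (1 + 2 * b * t) ^ n
      = (1 + 4 * (δ⁻¹ * b) * (δ * t / 2)) ^ n * Real.exp (-(δ * t / 2)) *
          Real.exp (-δ * t / 2) := by rw [hsplit, hlin]; ring
    _ ≤ 4 ^ n * (n ! + 1) * (4 ^ n * (1 + (δ⁻¹ * b) ^ n)) * Real.exp (-δ * t / 2) :=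
        mul_le_mul_of_nonneg_right (h.trans (by gcongr)) (Real.exp_pos _).le
    _ = 16 ^ n * (n ! + 1) * (1 + (δ⁻¹ * b) ^ n) * Real.exp (-δ * t / 2) := by
        rw [show (16 : ℝ) ^ n = 4 ^ n * 4 ^ n by rw [← mul_pow]; norm_num]; ring

/-- If every eigenvalue of `B ∈ M_N(ℂ)` has real part at least `δ > 0`,
then `‖e^{-tB}‖ ≤ C (1 + ‖B/δ‖^N) e^{-δ t / 2}` for all `t ≥ 0`, where the constant `C`
depends only on `N` (and the chosen norm). -/
theorem exp_neg_smul_norm_le_of_spectrum_re_ge (N : ℕ) :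
    ∃ C : ℝ, 0 < C ∧
      ∀ (δ : ℝ), 0 < δ →
        ∀ B : Matrix (Fin N) (Fin N) ℂ,
          (∀ z ∈ spectrum ℂ B, δ ≤ z.re) →
            ∀ t : ℝ, 0 ≤ t →
              ‖NormedSpace.exp ((-t) • B)‖ ≤
                C * (1 + ‖δ⁻¹ • B‖ ^ N) * Real.exp (-δ * t / 2) := by
  refine ⟨16 ^ N * (N ! + 1), by positivity, fun δ hδ B hB t ht => ?_⟩
  obtain ⟨L, hlen, hLspec, hL⟩ := B.exists_spectrum_list_prod_sub_algebraMap_eq_zero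
  have h := norm_exp_neg_smul_mul_le_of_list_prod_mul_eq_zero L
    (fun μ hμ => hB μ (hLspec μ hμ))
    (fun μ hμ => Matrix.norm_sub_algebraMap_le_of_mem_spectrum (hLspec μ hμ))
    (x := 1) (by rw [hL, mul_one]) ht
  rw [mul_one, hlen, Fintype.card_fin] at h
  rw [norm_smul, Real.norm_of_nonneg (inv_nonneg.mpr hδ.le)]
  calc ‖exp ((-t) • B)‖ ≤ ‖(1 : Matrix (Fin N) (Fin N) ℂ)‖ * Real.exp (-δ * t) *
        (1 + 2 * ‖B‖ * t) ^ N := h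
    _ ≤ Real.exp (-δ * t) * (1 + 2 * ‖B‖ * t) ^ N := by
        rw [mul_assoc]
        exact mul_le_of_le_one_left (by positivity) Matrix.linfty_opNorm_one_le
    _ ≤ _ := exp_neg_mul_mul_one_add_pow_le hδ (norm_nonneg B) ht N
end

section
/- Let B be an N×N complex matrix all of whose eigenvalues have nonnegative real part. Then for every t ≥ 0, the operator norm of e^{-tB} is bounded by C·(1 + t^N ‖B‖^N), where C depends only on N and the chosen norm. -/
open scoped Matrix

attribute [local instance] Matrix.linftyOpNormedRing Matrix.linftyOpNormedAlgebra

/-!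
Putzer's formula. If `μ₀, μ₁, …, μ_{N-1}` are the eigenvalues of `a = -B`, listed with
multiplicity, then by Cayley–Hamilton `∏_{j<N} (a - μ_j) = 0`, and
`e^{ta} = ∑_{k<N} r_k(t) P_k` with `P_k = ∏_{j<k} (a - μ_j)`, where the scalar functions
`r_k` solve the triangular system `r_0' = μ_0 r_0`, `r_k' = μ_k r_k + r_{k-1}`, `r_k(0) = δ_{k0}`:
both sides solve `X' = aX`, `X(0) = 1`. Since `Re μ_j ≤ 0`, the variation-of-constants formula
`r_{k+1}(t) = ∫_0^t e^{(t-s)μ_{k+1}} r_k(s) ds` gives `|r_k(t)| ≤ t^k`, while `|μ_j| ≤ ‖B‖` gives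
`‖P_k‖ ≤ (2‖B‖)^k`. Hence `‖e^{-tB}‖ ≤ ∑_{k<N} (2t‖B‖)^k ≤ N 2^N (1 + t^N ‖B‖^N)`.
-/

open Polynomial NormedSpace intervalIntegral

noncomputable def putzerCoeff (μ : ℕ → ℂ) : ℕ → ℝ → ℂ
  | 0 => fun t => Complex.exp (t * μ 0)
  | k + 1 => fun t =>
      Complex.exp (t * μ (k + 1)) *
        ∫ s in (0 : ℝ)..t, Complex.exp (-(s * μ (k + 1))) * putzerCoeff μ k s

namespace putzerCoeff

variable (μ : ℕ → ℂ)

theorem continuous (k : ℕ) : Continuous (putzerCoeff μ k) := by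
  induction k with
  | zero => exact Continuous.cexp (by fun_prop)
  | succ k ih =>
    have hint : Continuous fun s : ℝ => Complex.exp (-(s * μ (k + 1))) * putzerCoeff μ k s :=
      (Continuous.cexp (by fun_prop)).mul ih
    exact (Continuous.cexp (by fun_prop)).mul
      (continuous_primitive (fun a b => hint.intervalIntegrable a b) 0)

@[simp] theorem zero_apply_zero : putzerCoeff μ 0 0 = 1 := by
  simp [putzerCoeff]

@[simp] theorem succ_apply_zero (k : ℕ) : putzerCoeff μ (k + 1) 0 = 0 := by
  simp [putzerCoeff]

theorem hasDerivAt_zero (t : ℝ) :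
    HasDerivAt (putzerCoeff μ 0) (μ 0 * putzerCoeff μ 0 t) t := by
  have h := ((hasDerivAt_id (t : ℂ)).mul_const (μ 0)).cexp.comp_ofReal
  simpa [putzerCoeff, mul_comm] using h

theorem hasDerivAt_succ (k : ℕ) (t : ℝ) :
    HasDerivAt (putzerCoeff μ (k + 1))
      (μ (k + 1) * putzerCoeff μ (k + 1) t + putzerCoeff μ k t) t := by
  set c := μ (k + 1)
  have hint : Continuous fun s : ℝ => Complex.exp (-(s * c)) * putzerCoeff μ k s :=
    (Continuous.cexp (by fun_prop)).mul (continuous μ k)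
  have hexp : HasDerivAt (fun s : ℝ => Complex.exp (s * c)) (Complex.exp (t * c) * c) t :=
    ((hasDerivAt_id (t : ℂ)).mul_const c).cexp.comp_ofReal.congr_deriv (by simp)
  have hprim := integral_hasDerivAt_right (hint.intervalIntegrable 0 t)
    (hint.stronglyMeasurableAtFilter _ _) hint.continuousAt
  refine (hexp.mul hprim).congr_deriv ?_
  rw [← mul_assoc, ← Complex.exp_add, add_neg_cancel, Complex.exp_zero, one_mul]
  simp only [putzerCoeff, c]
  ring

theorem succ_eq_integral (k : ℕ) (t : ℝ) :
    putzerCoeff μ (k + 1) t =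
      ∫ s in (0 : ℝ)..t, Complex.exp ((t - s) * μ (k + 1)) * putzerCoeff μ k s := by
  rw [putzerCoeff]
  dsimp only
  rw [← integral_const_mul]
  refine integral_congr fun s _ => ?_
  rw [← mul_assoc, ← Complex.exp_add]
  ring_nf

theorem norm_le_pow {k : ℕ} (hμ : ∀ j ≤ k, (μ j).re ≤ 0) {t : ℝ} (ht : 0 ≤ t) :
    ‖putzerCoeff μ k t‖ ≤ t ^ k := by
  induction k generalizing t with
  | zero =>
    simpa [putzerCoeff, Complex.norm_exp] using mul_nonpos_of_nonneg_of_nonpos ht (hμ 0 le_rfl)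
  | succ k ih =>
    rw [succ_eq_integral]
    refine (norm_integral_le_of_norm_le_const fun s hs => ?_).trans_eq
      (by rw [sub_zero, abs_of_nonneg ht, pow_succ])
    rw [Set.uIoc_of_le ht] at hs
    have hexp : ‖Complex.exp ((t - s) * μ (k + 1))‖ ≤ 1 := by
      rw [Complex.norm_exp, Real.exp_le_one_iff]
      simpa using mul_nonpos_of_nonneg_of_nonpos (sub_nonneg.2 hs.2) (hμ _ le_rfl)
    calc ‖Complex.exp ((t - s) * μ (k + 1)) * putzerCoeff μ k s‖
        ≤ 1 * t ^ k := by
          rw [norm_mul]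
          exact mul_le_mul hexp ((ih (fun j hj => hμ j (hj.trans k.le_succ)) hs.1.le).trans
            (pow_le_pow_left₀ hs.1.le hs.2 k)) (norm_nonneg _) zero_le_one
      _ = t ^ k := one_mul _

end putzerCoeff

noncomputable def putzerPoly {R : Type*} [CommRing R] (μ : ℕ → R) (k : ℕ) : R[X] :=
  ∏ j ∈ Finset.range k, (X - C (μ j))

theorem putzerPoly_succ {R : Type*} [CommRing R] (μ : ℕ → R) (k : ℕ) :
    putzerPoly μ (k + 1) = putzerPoly μ k * (X - C (μ k)) :=
  Finset.prod_range_succ _ _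

section BanachAlgebra

variable {A : Type*} [NormedRing A] [NormedAlgebra ℂ A] (a : A) (μ : ℕ → ℂ)

theorem mul_aeval_putzerPoly (k : ℕ) :
    a * aeval a (putzerPoly μ k) =
      μ k • aeval a (putzerPoly μ k) + aeval a (putzerPoly μ (k + 1)) := by
  have hcomm : Commute a (aeval a (putzerPoly μ k)) := by
    simpa using (Commute.all X (putzerPoly μ k)).map (aeval a)
  rw [putzerPoly_succ, map_mul, map_sub, aeval_X, aeval_C, Algebra.algebraMap_eq_smul_one,
    mul_sub, mul_smul_comm, mul_one, hcomm.eq]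
  abel

theorem norm_aeval_putzerPoly_le [NormOneClass A] {k : ℕ} {R : ℝ} (hμ : ∀ j < k, ‖μ j‖ ≤ R) :
    ‖aeval a (putzerPoly μ k)‖ ≤ (‖a‖ + R) ^ k := by
  induction k with
  | zero => simp [putzerPoly]
  | succ k ih =>
    have hfac : ‖aeval a (X - C (μ k))‖ ≤ ‖a‖ + R := by
      rw [map_sub, aeval_X, aeval_C, Algebra.algebraMap_eq_smul_one]
      refine (norm_sub_le _ _).trans (add_le_add le_rfl ?_)
      simpa using hμ k k.lt_succ_self
    rw [putzerPoly_succ, map_mul, pow_succ]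
    exact (norm_mul_le _ _).trans <| mul_le_mul (ih fun j hj => hμ j (hj.trans k.lt_succ_self))
      hfac (norm_nonneg _) (pow_nonneg ((norm_nonneg _).trans hfac) k)

end BanachAlgebra

section LinearODE

variable {A : Type*} [NormedRing A] [NormedAlgebra ℂ A] [CompleteSpace A]

theorem hasDerivAt_exp_ofReal_smul (a : A) (t : ℝ) :
    HasDerivAt (fun u : ℝ => exp ((u : ℂ) • a)) (a * exp ((t : ℂ) • a)) t :=
  ((hasDerivAt_exp_smul_const' a (t : ℂ)).scomp t Complex.ofRealCLM.hasDerivAt).congr_deriv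
    (one_smul _ _)

theorem eq_exp_ofReal_smul_of_hasDerivAt {a : A} {x : ℝ → A}
    (hx : ∀ t, HasDerivAt x (a * x t) t) (hx0 : x 0 = 1) (t : ℝ) :
    x t = exp ((t : ℂ) • a) := by
  set y : ℝ → A := fun u => exp ((u : ℂ) • -a) * x u
  -- `exp (u • -a)` commutes with `a`, so the two terms of `y'` cancel
  have hy : ∀ u, HasDerivAt y 0 u := fun u => by
    refine ((hasDerivAt_exp_ofReal_smul (-a) u).mul (hx u)).congr_deriv ?_
    rw [← mul_assoc, ← ((Commute.refl a).neg_right.smul_right (u : ℂ)).exp_right.eq]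
    noncomm_ring
  have hyt : y t = 1 := by
    rw [is_const_of_deriv_eq_zero (fun u => (hy u).differentiableAt) (fun u => (hy u).deriv) t 0]
    simp [y, hx0]
  have hinv : exp ((t : ℂ) • a) * exp ((t : ℂ) • -a) = 1 := by
    have hball : ∀ b : A, b ∈ Metric.eball (0 : A) (expSeries ℂ A).radius := fun b => by
      simp [expSeries_radius_eq_top]
    rw [← exp_add_of_commute_of_mem_ball ((Commute.refl a).neg_right.smul_left _ |>.smul_right _)
      (hball _) (hball _), smul_neg, add_neg_cancel, exp_zero]
  calc x t = exp ((t : ℂ) • a) * y t := by rw [← mul_assoc, hinv, one_mul]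
    _ = exp ((t : ℂ) • a) := by rw [hyt, mul_one]

end LinearODE

section Putzer

variable {A : Type*} [NormedRing A] [NormedAlgebra ℂ A] (a : A) (μ : ℕ → ℂ) (n : ℕ)

noncomputable def putzerSum (t : ℝ) : A :=
  ∑ k ∈ Finset.range n, putzerCoeff μ k t • aeval a (putzerPoly μ k)

variable {a μ n}

theorem putzerSum_zero (hn : aeval a (putzerPoly μ n) = 0) : putzerSum a μ n 0 = 1 := by
  cases n with
  | zero => simpa [putzerSum, putzerPoly, eq_comm] using hn
  | succ m => simp [putzerSum, Finset.sum_range_succ', putzerPoly]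

theorem hasDerivAt_putzerSum (hn : aeval a (putzerPoly μ n) = 0) (t : ℝ) :
    HasDerivAt (putzerSum a μ n) (a * putzerSum a μ n t) t := by
  set P : ℕ → A := fun k => aeval a (putzerPoly μ k)
  have hP : ∀ k, a * P k = μ k • P k + P (k + 1) := mul_aeval_putzerPoly a μ
  cases n with
  | zero =>
    have h0 : putzerSum a μ 0 = fun _ => 0 := by ext; simp [putzerSum]
    simpa [h0] using hasDerivAt_const t (0 : A)
  | succ m =>
    have hsum : putzerSum a μ (m + 1) = fun t =>
        ∑ k ∈ Finset.range m, putzerCoeff μ (k + 1) t • P (k + 1) + putzerCoeff μ 0 t • P 0 := by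
      ext t; exact Finset.sum_range_succ' _ _
    -- by `hP` the sum telescopes, and its last term vanishes since `P (m + 1) = 0`
    have hval : a * putzerSum a μ (m + 1) t =
        ∑ k ∈ Finset.range m,
          (μ (k + 1) * putzerCoeff μ (k + 1) t + putzerCoeff μ k t) • P (k + 1) +
          (μ 0 * putzerCoeff μ 0 t) • P 0 := by
      change a * ∑ k ∈ Finset.range (m + 1), putzerCoeff μ k t • P k = _
      simp only [Finset.mul_sum, mul_smul_comm, hP, smul_add, smul_smul,
        Finset.sum_add_distrib, add_smul]
      rw [Finset.sum_range_succ' (fun k => (putzerCoeff μ k t * μ k) • P k),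
        Finset.sum_range_succ (fun k => putzerCoeff μ k t • P (k + 1))]
      simp only [P, hn, smul_zero, add_zero, mul_comm]
      abel
    rw [hval, hsum]
    exact (HasDerivAt.fun_sum fun k _ =>
      (putzerCoeff.hasDerivAt_succ μ k t).smul_const (P (k + 1))).add
      ((putzerCoeff.hasDerivAt_zero μ t).smul_const (P 0))

theorem exp_smul_eq_putzerSum [CompleteSpace A] (hn : aeval a (putzerPoly μ n) = 0) (t : ℝ) :
    exp ((t : ℂ) • a) = putzerSum a μ n t :=
  (eq_exp_ofReal_smul_of_hasDerivAt (hasDerivAt_putzerSum hn) (putzerSum_zero hn) t).symm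

theorem norm_putzerSum_le [NormOneClass A] {R t : ℝ} (ht : 0 ≤ t)
    (hre : ∀ j < n, (μ j).re ≤ 0) (hμ : ∀ j < n, ‖μ j‖ ≤ R) :
    ‖putzerSum a μ n t‖ ≤ ∑ k ∈ Finset.range n, (t * (‖a‖ + R)) ^ k := by
  refine norm_sum_le_of_le _ fun k hk => ?_
  have hkn := Finset.mem_range.mp hk
  rw [norm_smul, mul_pow]
  exact mul_le_mul (putzerCoeff.norm_le_pow μ (fun j hj => hre j (by omega)) ht)
    (norm_aeval_putzerPoly_le a μ fun j hj => hμ j (hj.trans hkn)) (norm_nonneg _) (by positivity)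

end Putzer

theorem Polynomial.Monic.exists_putzerPoly_eq {K : Type*} [Field K] {p : K[X]} (hp : p.Monic)
    (hs : p.Splits) : ∃ μ : ℕ → K, (∀ j < p.natDegree, μ j ∈ p.roots) ∧
      putzerPoly μ p.natDegree = p := by
  set L := p.roots.toList
  have hlen : L.length = p.natDegree := by
    rw [Multiset.length_toList, ← splits_iff_card_roots.mp hs]
  refine ⟨fun j => L.getD j 0, fun j hj => ?_, ?_⟩
  · rw [← hlen] at hj
    change L.getD j 0 ∈ p.roots
    rw [List.getD_eq_getElem _ _ hj, ← Multiset.mem_toList]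
    exact L.getElem_mem hj
  · have hget : ∀ i : Fin L.length, L.getD i 0 = L[i.1] := fun i => List.getD_eq_getElem _ _ i.2
    rw [putzerPoly, ← hlen, Finset.prod_range]
    simp only [hget]
    rw [Fin.prod_univ_fun_getElem L (fun y => X - C y), Multiset.prod_map_toList]
    exact (hs.eq_prod_roots_of_monic hp).symm

theorem Matrix.exists_aeval_putzerPoly_eq_zero {K n : Type*} [Field K] [IsAlgClosed K]
    [Fintype n] [DecidableEq n] (B : Matrix n n K) :
    ∃ μ : ℕ → K, (∀ j < Fintype.card n, μ j ∈ spectrum K B) ∧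
      aeval B (putzerPoly μ (Fintype.card n)) = 0 := by
  obtain ⟨μ, hroot, hprod⟩ := B.charpoly_monic.exists_putzerPoly_eq (IsAlgClosed.splits _)
  rw [charpoly_natDegree_eq_dim] at hroot hprod
  refine ⟨μ, fun j hj => ?_, hprod ▸ aeval_self_charpoly B⟩
  exact mem_spectrum_iff_isRoot_charpoly.mpr (isRoot_of_mem_roots (hroot j hj))

theorem pow_le_one_add_pow {x : ℝ} (hx : 0 ≤ x) {k n : ℕ} (hk : k ≤ n) : x ^ k ≤ 1 + x ^ n := by
  rcases le_or_gt x 1 with h | h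
  · linarith [pow_le_one₀ hx h (n := k), pow_nonneg hx n]
  · linarith [pow_le_pow_right₀ h.le hk]

theorem sum_range_mul_pow_le {c x : ℝ} (hc : 1 ≤ c) (hx : 0 ≤ x) (n : ℕ) :
    ∑ k ∈ Finset.range n, (c * x) ^ k ≤ n * c ^ n * (1 + x ^ n) := by
  calc ∑ k ∈ Finset.range n, (c * x) ^ k ≤ ∑ k ∈ Finset.range n, c ^ n * (1 + x ^ n) :=
        Finset.sum_le_sum fun k hk => by
          have hkn := (Finset.mem_range.mp hk).le
          rw [mul_pow]
          exact mul_le_mul (pow_le_pow_right₀ hc hkn) (pow_le_one_add_pow hx hkn)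
            (by positivity) (by positivity)
    _ = n * c ^ n * (1 + x ^ n) := by
        rw [Finset.sum_const, Finset.card_range, nsmul_eq_mul, mul_assoc]

/-- If every eigenvalue of `B ∈ M_N(ℂ)` has nonnegative real part, then
`‖e^{-tB}‖ ≤ C (1 + t^N ‖B‖^N)` for all `t ≥ 0`, where `C` depends only on `N`
(and the chosen norm). -/
theorem exp_neg_smul_norm_le_of_spectrum_re_nonneg (N : ℕ) :
    ∃ C : ℝ, 0 < C ∧
      ∀ B : Matrix (Fin N) (Fin N) ℂ,
        (∀ z ∈ spectrum ℂ B, 0 ≤ z.re) →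
          ∀ t : ℝ, 0 ≤ t →
            ‖NormedSpace.exp ((-t) • B)‖ ≤ C * (1 + t ^ N * ‖B‖ ^ N) := by
  refine ⟨(N + 1) * 2 ^ N, by positivity, fun B hB t ht => ?_⟩
  rcases N.eq_zero_or_pos with rfl | hN
  · simp only [Subsingleton.elim (exp ((-t) • B)) 0, norm_zero]
    positivity
  have : Nonempty (Fin N) := ⟨⟨0, hN⟩⟩
  obtain ⟨μ, hspec, hann⟩ := (-B).exists_aeval_putzerPoly_eq_zero
  rw [Fintype.card_fin] at hspec hann
  have hre : ∀ j < N, (μ j).re ≤ 0 := fun j hj => by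
    have h := hB (-μ j) (by simpa [← spectrum.neg_eq] using hspec j hj)
    rwa [Complex.neg_re, neg_nonneg] at h
  have hnorm : ∀ j < N, ‖μ j‖ ≤ ‖B‖ := fun j hj =>
    (spectrum.norm_le_norm_of_mem (hspec j hj)).trans_eq (norm_neg B)
  have hexp : exp ((-t) • B) = putzerSum (-B) μ N t := by
    rw [show (-t) • B = (t : ℂ) • -B by rw [Complex.coe_smul, smul_neg, neg_smul]]
    exact exp_smul_eq_putzerSum hann t
  calc ‖exp ((-t) • B)‖ ≤ ∑ k ∈ Finset.range N, (2 * (t * ‖B‖)) ^ k := by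
        rw [hexp]
        refine (norm_putzerSum_le ht hre hnorm).trans_eq (Finset.sum_congr rfl fun k _ => ?_)
        rw [norm_neg]
        ring
    _ ≤ N * 2 ^ N * (1 + (t * ‖B‖) ^ N) := sum_range_mul_pow_le one_le_two (by positivity) N
    _ ≤ (N + 1) * 2 ^ N * (1 + t ^ N * ‖B‖ ^ N) := by
        rw [mul_pow]
        gcongr
        linarith
end

section
/- Let T be an upper triangular N×N complex matrix whose diagonal entries all have nonnegative real part. For any unit vector z⁰ (in the sup norm) and t ≥ 0, the solution z(t) = e^{-tT} z⁰ satisfies |z_k(t)| ≤ C·(1 + t^{N-k} ‖T‖^{N-k}) for each component k, with C depending only on N. -/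
/-!
Each component satisfies `z_k' = -T_kk z_k - ∑_{j > k} T_kj z_j`. Since `Re T_kk ≥ 0`, the
factor `e^{s T_kk}` turns this into `(e^{s T_kk} z_k)' = -e^{s T_kk} ∑_{j > k} T_kj z_j`, and the
mean value inequality gives `|z_k(t)| ≤ |z_k(0)| + t ‖T‖ sup_{s ≤ t, j > k} |z_j(s)|`. Going up
from the last component, where the sum is empty, this yields `|z_k(t)| ≤ (1 + t ‖T‖)^{N-1-k}`,
and `(1 + x)^n ≤ 2^{n-1} (1 + x^n)`.
-/

open scoped Matrix

attribute [local instance] Matrix.linftyOpNormedRing Matrix.linftyOpNormedAlgebra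

open Set
open scoped Finset

section VariationOfConstants

variable {E : Type*} [NormedAddCommGroup E] [NormedSpace ℂ E]

theorem norm_le_add_mul_of_hasDerivAt_eq_neg_smul_sub {f g : ℝ → E} {c : ℂ} (hc : 0 ≤ c.re)
    (hf : ∀ s, HasDerivAt f (-(c • f s) - g s) s) {t M : ℝ} (ht : 0 ≤ t)
    (hM : ∀ s ∈ Icc 0 t, ‖g s‖ ≤ M) :
    ‖f t‖ ≤ ‖f 0‖ + t * M := by
  set h : ℝ → E := fun s => Complex.exp (s * c) • f s with h_def
  have hh : ∀ s : ℝ, HasDerivAt h (-(Complex.exp (s * c) • g s)) s := by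
    intro s
    have he : HasDerivAt (fun u : ℝ => Complex.exp (u * c)) (Complex.exp (s * c) * c) s := by
      simpa using ((Complex.ofRealCLM.hasDerivAt (x := s)).mul_const c).cexp
    refine (he.smul (hf s)).congr_deriv ?_
    rw [smul_sub, smul_neg, mul_smul]
    abel
  have hnorm_exp : ∀ s : ℝ, ‖Complex.exp (s * c)‖ = Real.exp (s * c.re) := by
    intro s
    rw [Complex.norm_exp]
    simp
  have hh' : ∀ s ∈ Ico 0 t, ‖-(Complex.exp (s * c) • g s)‖ ≤ Real.exp (t * c.re) * M := by
    intro s hs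
    rw [norm_neg, norm_smul, hnorm_exp]
    exact mul_le_mul (Real.exp_le_exp.2 (mul_le_mul_of_nonneg_right hs.2.le hc))
      (hM s (Ico_subset_Icc_self hs)) (norm_nonneg _) (Real.exp_nonneg _)
  have hmvt : ‖h t - f 0‖ ≤ Real.exp (t * c.re) * M * t := by
    simpa [h_def] using norm_image_sub_le_of_norm_deriv_le_segment'
      (fun s _ => (hh s).hasDerivWithinAt) hh' t ⟨ht, le_rfl⟩
  have hft : ‖f t‖ = Real.exp (-(t * c.re)) * ‖h t‖ := by
    rw [h_def, norm_smul, hnorm_exp, ← mul_assoc, ← Real.exp_add]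
    simp
  have hdamp : Real.exp (-(t * c.re)) ≤ 1 :=
    Real.exp_le_one_iff.2 (neg_nonpos.2 (mul_nonneg ht hc))
  calc ‖f t‖ = Real.exp (-(t * c.re)) * ‖h t‖ := hft
    _ ≤ Real.exp (-(t * c.re)) * (‖f 0‖ + Real.exp (t * c.re) * M * t) := by
      gcongr
      linarith [norm_sub_norm_le (h t) (f 0)]
    _ = Real.exp (-(t * c.re)) * ‖f 0‖ + t * M := by
      rw [mul_add, ← mul_assoc, ← mul_assoc, ← Real.exp_add]
      simp only [neg_add_cancel, Real.exp_zero, one_mul]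
      ring
    _ ≤ ‖f 0‖ + t * M := by
      gcongr
      exact mul_le_of_le_one_left (norm_nonneg _) hdamp

end VariationOfConstants

theorem hasDerivAt_exp_neg_smul_mulVec {ι : Type*} [Fintype ι] [DecidableEq ι]
    (T : Matrix ι ι ℂ) (z0 : ι → ℂ) (s : ℝ) :
    HasDerivAt (fun u : ℝ => NormedSpace.exp ((-u) • T) *ᵥ z0)
      (-(T *ᵥ (NormedSpace.exp ((-s) • T) *ᵥ z0))) s := by
  let L : Matrix ι ι ℂ →L[ℝ] (ι → ℂ) :=
    LinearMap.toContinuousLinearMap ((Matrix.mulVecBilin ℝ ℝ).flip z0)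
  have hexp : HasDerivAt (fun u : ℝ => NormedSpace.exp ((-u) • T))
      (-(T * NormedSpace.exp ((-s) • T))) s :=
    ((hasDerivAt_exp_smul_const' T (-s)).scomp s (hasDerivAt_neg s)).congr_deriv
      (neg_one_smul ℝ _)
  refine (L.hasFDerivAt.comp_hasDerivAt s hexp).congr_deriv ?_
  change (-(T * NormedSpace.exp ((-s) • T))) *ᵥ z0 = _
  rw [Matrix.neg_mulVec, Matrix.mulVec_mulVec]

section Triangular

variable {ι R : Type*} [Fintype ι] [LinearOrder ι]

theorem Matrix.BlockTriangular.mulVec_apply_eq_diag_add [NonUnitalNonAssocSemiring R]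
    {T : Matrix ι ι R} (hT : T.BlockTriangular id) (v : ι → R) (k : ι) :
    (T *ᵥ v) k = T k k * v k + (T *ᵥ (Set.Ioi k).indicator v) k := by
  have hterm : ∀ j, T k j * v j =
      (if k = j then T k k * v k else 0) + T k j * (Set.Ioi k).indicator v j := by
    intro j
    rcases lt_trichotomy j k with hjk | rfl | hkj
    · simp [hT hjk, hjk.ne', hjk.not_gt]
    · simp
    · simp [hkj, hkj.ne]
  simp only [Matrix.mulVec, dotProduct]
  rw [Finset.sum_congr rfl fun j _ => hterm j, Finset.sum_add_distrib, Finset.sum_ite_eq,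
    if_pos (Finset.mem_univ k)]

variable [DecidableEq ι]

theorem norm_mulVec_indicator_Ioi_apply_le [NormedRing R] (T : Matrix ι ι R) {v : ι → R}
    {M : ℝ} (hM : 0 ≤ M) (k : ι) (hv : ∀ j, k < j → ‖v j‖ ≤ M) :
    ‖(T *ᵥ (Set.Ioi k).indicator v) k‖ ≤ ‖T‖ * M := calc
  _ ≤ ‖T *ᵥ (Set.Ioi k).indicator v‖ := norm_le_pi_norm _ k
  _ ≤ ‖T‖ * ‖(Set.Ioi k).indicator v‖ := Matrix.linfty_opNorm_mulVec _ _
  _ ≤ ‖T‖ * M := by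
    gcongr
    refine (pi_norm_le_iff_of_nonneg hM).2 fun j => ?_
    by_cases hj : k < j
    · simpa [hj] using hv j hj
    · simpa [hj] using hM

variable {T : Matrix ι ι ℂ} {z0 : ι → ℂ}

theorem Matrix.BlockTriangular.hasDerivAt_exp_neg_smul_mulVec_apply (hT : T.BlockTriangular id)
    (z0 : ι → ℂ) (k : ι) (s : ℝ) :
    HasDerivAt (fun u : ℝ => (NormedSpace.exp ((-u) • T) *ᵥ z0) k)
      (-(T k k • (NormedSpace.exp ((-s) • T) *ᵥ z0) k) -
        (T *ᵥ (Set.Ioi k).indicator (NormedSpace.exp ((-s) • T) *ᵥ z0)) k) s :=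
  (hasDerivAt_pi.1 (hasDerivAt_exp_neg_smul_mulVec T z0 s) k).congr_deriv <| by
    rw [Pi.neg_apply, hT.mulVec_apply_eq_diag_add, neg_add, smul_eq_mul, sub_eq_add_neg]

theorem Matrix.BlockTriangular.norm_exp_neg_smul_mulVec_apply_le (hT : T.BlockTriangular id)
    {k : ι} (hk : 0 ≤ (T k k).re) (hz0 : ‖z0‖ ≤ 1) {t M : ℝ} (ht : 0 ≤ t) (hM : 0 ≤ M)
    (hbound : ∀ s ∈ Icc 0 t, ∀ j, k < j → ‖(NormedSpace.exp ((-s) • T) *ᵥ z0) j‖ ≤ M) :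
    ‖(NormedSpace.exp ((-t) • T) *ᵥ z0) k‖ ≤ 1 + t * (‖T‖ * M) := by
  refine (norm_le_add_mul_of_hasDerivAt_eq_neg_smul_sub hk
    (hT.hasDerivAt_exp_neg_smul_mulVec_apply z0 k) ht
    fun s hs => norm_mulVec_indicator_Ioi_apply_le T hM k (hbound s hs)).trans ?_
  gcongr
  simpa using (norm_le_pi_norm z0 k).trans hz0

theorem Matrix.BlockTriangular.norm_exp_neg_smul_mulVec_apply_le_pow [LocallyFiniteOrderTop ι]
    (hT : T.BlockTriangular id) (hdiag : ∀ i, 0 ≤ (T i i).re) (hz0 : ‖z0‖ ≤ 1) {t : ℝ}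
    (ht : 0 ≤ t) (k : ι) :
    ‖(NormedSpace.exp ((-t) • T) *ᵥ z0) k‖ ≤ (1 + t * ‖T‖) ^ #(Finset.Ioi k) := by
  suffices h : ∀ m (k : ι), #(Finset.Ioi k) ≤ m →
      ∀ s ∈ Icc 0 t, ‖(NormedSpace.exp ((-s) • T) *ᵥ z0) k‖ ≤ (1 + t * ‖T‖) ^ m from
    h _ k le_rfl t ⟨ht, le_rfl⟩
  have hx : 0 ≤ t * ‖T‖ := by positivity
  intro m
  induction m with
  | zero =>
    intro k hk s hs
    have hmax : ∀ j, ¬ k < j := by simpa [Finset.eq_empty_iff_forall_notMem] using hk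
    simpa using hT.norm_exp_neg_smul_mulVec_apply_le (hdiag k) hz0 hs.1 le_rfl
      fun _ _ j hj => (hmax j hj).elim
  | succ m ih =>
    intro k hk s hs
    have hIoi : ∀ j, k < j → #(Finset.Ioi j) ≤ m := fun j hj =>
      Nat.lt_succ_iff.1 ((Finset.card_lt_card (Finset.Ioi_ssubset_Ioi hj)).trans_le hk)
    have hpow : 1 ≤ (1 + t * ‖T‖) ^ m := one_le_pow₀ (by linarith)
    calc _ ≤ 1 + s * (‖T‖ * (1 + t * ‖T‖) ^ m) :=
          hT.norm_exp_neg_smul_mulVec_apply_le (hdiag k) hz0 hs.1 (by positivity)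
            fun u hu j hj => ih j (hIoi j hj) u ⟨hu.1, hu.2.trans hs.2⟩
      _ ≤ 1 + t * (‖T‖ * (1 + t * ‖T‖) ^ m) := by gcongr; exact hs.2
      _ ≤ (1 + t * ‖T‖) ^ (m + 1) := by rw [pow_succ']; nlinarith

end Triangular

/-- Let `T` be upper triangular with diagonal entries of nonnegative real
part. For any sup-norm unit vector `z⁰` and `t ≥ 0`, the components of
`z(t) = e^{-tT} z⁰` satisfy `|z_k(t)| ≤ C (1 + t^{N-k} ‖T‖^{N-k})` (here `k : Fin N`
corresponds to the `(k+1)`-th component, so the exponent is `N - 1 - k`), with `C`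
depending only on `N`. -/
theorem exp_neg_triangular_component_bound (N : ℕ) :
    ∃ C : ℝ, 0 < C ∧
      ∀ T : Matrix (Fin N) (Fin N) ℂ,
        (∀ i j : Fin N, j < i → T i j = 0) →
        (∀ i : Fin N, 0 ≤ (T i i).re) →
          ∀ z0 : Fin N → ℂ, ‖z0‖ = 1 →
            ∀ t : ℝ, 0 ≤ t →
              ∀ k : Fin N,
                ‖(NormedSpace.exp ((-t) • T)).mulVec z0 k‖ ≤
                  C * (1 + t ^ (N - 1 - (k : ℕ)) * ‖T‖ ^ (N - 1 - (k : ℕ))) := by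
  refine ⟨2 ^ (N - 1), by positivity, fun T hT hdiag z0 hz0 t ht k => ?_⟩
  have hx : 0 ≤ t * ‖T‖ := by positivity
  have htri : T.BlockTriangular id := fun i j h => hT i j h
  calc _ ≤ (1 + t * ‖T‖) ^ (N - 1 - (k : ℕ)) := by
        simpa [Fin.card_Ioi] using htri.norm_exp_neg_smul_mulVec_apply_le_pow hdiag hz0.le ht k
    _ ≤ 2 ^ (N - 1 - (k : ℕ) - 1) * (1 ^ _ + (t * ‖T‖) ^ _) := add_pow_le zero_le_one hx _
    _ ≤ _ := by
        rw [one_pow, mul_pow]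
        gcongr
        · norm_num
        · omega
end

section
/- For any open neighbourhood Ω of the nonnegative orthant ℝ^N_{≥0}, there exists an open set Ω̃ with ℝ^N_{≥0} ⊂ Ω̃ ⊂ Ω that is C^∞-diffeomorphic to ℝ^N. -/
open Set Metric Function intervalIntegral

section Aux

variable {N : ℕ}

/-- sum of squares -/
noncomputable def Sq (N : ℕ) : (Fin N → ℝ) → ℝ := fun y => ∑ i, y i * y i

lemma Sq_nonneg (y : Fin N → ℝ) : 0 ≤ Sq N y :=
  Finset.sum_nonneg fun i _ => mul_self_nonneg _

lemma contDiff_Sq : ContDiff ℝ (⊤ : ℕ∞) (Sq N) :=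
  ContDiff.sum fun i _ =>
    ((ContinuousLinearMap.proj i : (Fin N → ℝ) →L[ℝ] ℝ).contDiff).mul
      ((ContinuousLinearMap.proj i : (Fin N → ℝ) →L[ℝ] ℝ).contDiff)

lemma Sq_smul (c : ℝ) (y : Fin N → ℝ) : Sq N (c • y) = c ^ 2 * Sq N y := by
  simp only [Sq, Pi.smul_apply, smul_eq_mul, Finset.mul_sum]
  exact Finset.sum_congr rfl fun i _ => by ring

lemma sq_le_Sq (y : Fin N → ℝ) (i : Fin N) : y i * y i ≤ Sq N y :=
  Finset.single_le_sum (f := fun j => y j * y j) (fun j _ => mul_self_nonneg _)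
    (Finset.mem_univ i)

/-- the admissibility predicate for the scaling function -/
def Good (N : ℕ) (Ω : Set (Fin N → ℝ)) (c s : ℝ) : Prop :=
  1 ≤ c ∧ ∀ z : Fin N → ℝ, (∀ i, 0 ≤ z i) → Sq N z ≤ s → 1 / c ≤ infDist z Ωᶜ

lemma Good.mono_c {Ω : Set (Fin N → ℝ)} {c c' s : ℝ} (h : Good N Ω c s) (hcc : c ≤ c') :
    Good N Ω c' s := by
  refine ⟨h.1.trans hcc, fun z hz hzs => ?_⟩
  calc 1 / c' ≤ 1 / c := one_div_le_one_div_of_le (lt_of_lt_of_le zero_lt_one h.1) hcc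
    _ ≤ _ := h.2 z hz hzs

lemma Good.anti_s {Ω : Set (Fin N → ℝ)} {c s s' : ℝ} (h : Good N Ω c s') (hss : s ≤ s') :
    Good N Ω c s :=
  ⟨h.1, fun z hz hzs => h.2 z hz (hzs.trans hss)⟩

lemma good_local (Ω : Set (Fin N → ℝ)) (hΩ : IsOpen Ω)
    (horth : {x : Fin N → ℝ | ∀ i, 0 ≤ x i} ⊆ Ω) (hne : Ωᶜ.Nonempty) (s₀ : ℝ) :
    ∃ c, ∀ᶠ s in nhds s₀, Good N Ω c s := by
  set Kc : Set (Fin N → ℝ) := {z | (∀ i, 0 ≤ z i) ∧ Sq N z ≤ s₀ + 1} with hKc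
  have hKclosed : IsClosed Kc := by
    have : Kc = (⋂ i, {z : Fin N → ℝ | 0 ≤ z i}) ∩ {z | Sq N z ≤ s₀ + 1} := by
      ext z; simp [hKc, Set.mem_iInter]
    rw [this]
    exact (isClosed_iInter fun i =>
      isClosed_le continuous_const (continuous_apply i)).inter
      (isClosed_le contDiff_Sq.continuous continuous_const)
  have hKcomp : IsCompact Kc := by
    rw [Metric.isCompact_iff_isClosed_bounded]
    refine ⟨hKclosed, (Metric.isBounded_closedBall
      (x := (0 : Fin N → ℝ)) (r := Real.sqrt (s₀ + 1))).subset ?_⟩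
    intro z hz
    rw [Metric.mem_closedBall, dist_zero_right]
    rw [pi_norm_le_iff_of_nonneg (Real.sqrt_nonneg _)]
    intro i
    have h1 : z i * z i ≤ s₀ + 1 := (sq_le_Sq z i).trans hz.2
    have : ‖z i‖ = Real.sqrt (z i * z i) := by
      rw [show z i * z i = z i ^ 2 by ring, Real.sqrt_sq_eq_abs, Real.norm_eq_abs]
    rw [this]
    exact Real.sqrt_le_sqrt h1
  have hev : ∀ᶠ s in nhds s₀, s < s₀ + 1 :=
    Filter.Tendsto.eventually_lt_const (by linarith) Filter.tendsto_id
  rcases Kc.eq_empty_or_nonempty with hE | hNE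
  · refine ⟨1, hev.mono fun s hs => ⟨le_refl 1, fun z hz hzs => ?_⟩⟩
    exact absurd (show z ∈ Kc from ⟨hz, by linarith⟩) (by simp [hE])
  · obtain ⟨z₀, hz₀K, hz₀min⟩ :=
      hKcomp.exists_isMinOn hNE (continuous_infDist_pt Ωᶜ).continuousOn
    have hz₀Ω : z₀ ∈ Ω := horth hz₀K.1
    have hm : 0 < infDist z₀ Ωᶜ := by
      rw [← hΩ.isClosed_compl.notMem_iff_infDist_pos hne]
      simpa using hz₀Ω
    refine ⟨max 1 (1 / infDist z₀ Ωᶜ), hev.mono fun s hs => ⟨le_max_left _ _, ?_⟩⟩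
    intro z hz hzs
    have hzK : z ∈ Kc := ⟨hz, by linarith⟩
    have h2 : infDist z₀ Ωᶜ ≤ infDist z Ωᶜ := hz₀min hzK
    have hc0 : 0 < max 1 (1 / infDist z₀ Ωᶜ) := lt_of_lt_of_le zero_lt_one (le_max_left _ _)
    have : 1 / max 1 (1 / infDist z₀ Ωᶜ) ≤ infDist z₀ Ωᶜ := by
      rw [div_le_iff₀ hc0]
      rw [← div_le_iff₀' hm]
      exact le_max_right _ _
    linarith

lemma good_nat (Ω : Set (Fin N → ℝ)) (hΩ : IsOpen Ω)
    (horth : {x : Fin N → ℝ | ∀ i, 0 ≤ x i} ⊆ Ω) (hne : Ωᶜ.Nonempty) :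
    ∃ M : ℕ → ℝ, ∀ n : ℕ, Good N Ω (M n) n := by
  have h := fun n : ℕ => good_local Ω hΩ horth hne n
  choose M hM using h
  exact ⟨M, fun n => (hM n).self_of_nhds⟩

/-- An entire function dominating a given sequence of bounds. -/
lemma exists_entire_dominating (M : ℕ → ℝ) :
    ∃ μ : ℝ → ℝ, ContDiff ℝ (⊤ : ℕ∞) μ ∧ (∀ s, 1 ≤ μ s) ∧ MonotoneOn μ (Ici 0) ∧
      (∀ s : ℝ, 0 ≤ s → M ⌈s⌉₊ ≤ μ s) := by
  set Mc : ℕ → ℝ := fun n => 1 + ∑ k ∈ Finset.range (n + 1), max (M k) 0 with hMcdef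
  have hMc1 : ∀ n, 1 ≤ Mc n := by
    intro n
    have : (0:ℝ) ≤ ∑ k ∈ Finset.range (n + 1), max (M k) 0 :=
      Finset.sum_nonneg fun k _ => le_max_right _ _
    simp only [hMcdef]; linarith
  have hMc0 : ∀ n, 0 ≤ Mc n := fun n => zero_le_one.trans (hMc1 n)
  have hMcM : ∀ n, M n ≤ Mc n := by
    intro n
    have h1 : max (M n) 0 ≤ ∑ k ∈ Finset.range (n + 1), max (M k) 0 :=
      Finset.single_le_sum (f := fun k => max (M k) 0) (fun k _ => le_max_right _ _)
        (Finset.self_mem_range_succ n)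
    have h2 : M n ≤ max (M n) 0 := le_max_left _ _
    simp only [hMcdef]; linarith
  have hMcmono : Monotone Mc := by
    intro a b hab
    simp only [hMcdef]
    have : ∑ k ∈ Finset.range (a + 1), max (M k) 0 ≤ ∑ k ∈ Finset.range (b + 1), max (M k) 0 :=
      Finset.sum_le_sum_of_subset_of_nonneg
        (Finset.range_subset_range.mpr (by omega)) (fun k _ _ => le_max_right _ _)
    linarith
  set d : ℕ → ℕ := fun n => n + 1 + ⌈Mc (n + 2)⌉₊ with hddef
  have hMc_le_pow : ∀ n, Mc (n + 2) ≤ 2 ^ (⌈Mc (n + 2)⌉₊ : ℕ) := by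
    intro n
    calc Mc (n + 2) ≤ (⌈Mc (n + 2)⌉₊ : ℝ) := Nat.le_ceil _
      _ ≤ 2 ^ (⌈Mc (n + 2)⌉₊ : ℕ) := by
          have := Nat.lt_two_pow_self (n := ⌈Mc (n + 2)⌉₊)
          exact_mod_cast this.le
  -- summable bound on radius R
  set u : ℝ → ℕ → ℝ := fun R n => Mc (n + 2) * (R / (n + 1)) ^ (2 * d n) with hudef
  have hu_nonneg : ∀ R n, 0 ≤ R → 0 ≤ u R n := fun R n hR =>
    mul_nonneg (hMc0 _) (pow_nonneg (div_nonneg hR (by positivity)) _)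
  have hu : ∀ R : ℝ, 0 ≤ R → Summable (u R) := by
    intro R hR
    rw [← summable_nat_add_iff ⌈2 * R⌉₊]
    have hbound : ∀ n : ℕ, u R (n + ⌈2 * R⌉₊) ≤ (1/4 : ℝ) ^ n := by
      intro n
      set m := n + ⌈2 * R⌉₊ with hm
      have h2R : 2 * R ≤ (m : ℝ) + 1 := by
        have h1 : 2 * R ≤ (⌈2 * R⌉₊ : ℝ) := Nat.le_ceil _
        have h2 : (⌈2 * R⌉₊ : ℝ) ≤ (m : ℝ) := by exact_mod_cast Nat.le_add_left _ _
        linarith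
      have hhalf : R / ((m : ℝ) + 1) ≤ 1 / 2 := by
        rw [div_le_div_iff₀ (by positivity) (by norm_num)]
        linarith
      have hp1 : (R / ((m : ℝ) + 1)) ^ (2 * d m) ≤ (1/2 : ℝ) ^ (2 * d m) :=
        pow_le_pow_left₀ (div_nonneg hR (by positivity)) hhalf _
      have hp2 : ((1:ℝ)/2) ^ (2 * d m) = (1/4 : ℝ) ^ (d m) := by
        rw [pow_mul]; norm_num
      set c := ⌈Mc (m + 2)⌉₊ with hc
      have key : Mc (m + 2) * (1/4 : ℝ) ^ (d m) ≤ (1/4 : ℝ) ^ (m + 1) := by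
        have hdm : d m = m + 1 + c := rfl
        rw [hdm, pow_add]
        have h1 : Mc (m + 2) * ((1/4:ℝ) ^ c) ≤ 1 := by
          calc Mc (m + 2) * ((1/4:ℝ) ^ c) ≤ (2:ℝ) ^ c * ((1/4:ℝ) ^ c) := by
                apply mul_le_mul_of_nonneg_right (hMc_le_pow m) (by positivity)
            _ = ((2:ℝ) * (1/4)) ^ c := by rw [mul_pow]
            _ = ((1:ℝ)/2) ^ c := by norm_num
            _ ≤ 1 := pow_le_one₀ (by norm_num) (by norm_num)
        calc Mc (m + 2) * ((1/4:ℝ) ^ (m+1) * (1/4:ℝ) ^ c)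
            = (1/4:ℝ) ^ (m+1) * (Mc (m + 2) * (1/4:ℝ) ^ c) := by ring
          _ ≤ (1/4:ℝ) ^ (m+1) * 1 := by
              apply mul_le_mul_of_nonneg_left h1 (by positivity)
          _ = (1/4:ℝ) ^ (m+1) := mul_one _
      calc u R m ≤ Mc (m + 2) * (1/4 : ℝ) ^ (d m) := by
            simp only [hudef]
            rw [← hp2]
            exact mul_le_mul_of_nonneg_left hp1 (hMc0 _)
        _ ≤ (1/4 : ℝ) ^ (m + 1) := key
        _ ≤ (1/4 : ℝ) ^ n := by
            exact Bound.pow_le_pow_right_of_le_one_or_one_le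
              (Or.inr ⟨by norm_num, by norm_num, by omega⟩)
    exact Summable.of_nonneg_of_le (fun n => hu_nonneg R _ hR) hbound
      (summable_geometric_of_lt_one (by norm_num) (by norm_num))
  -- the complex function
  set Fc : ℕ → ℂ → ℂ := fun n z => (Mc (n + 2) : ℂ) * (z / ((n : ℂ) + 1)) ^ (2 * d n)
    with hFcdef
  have hFc_norm : ∀ (n : ℕ) (z : ℂ), ‖Fc n z‖ = u (‖z‖) n := by
    intro n z
    simp only [hFcdef, hudef, norm_mul, norm_pow, norm_div]
    rw [Complex.norm_real]
    have h1 : ‖(n : ℂ) + 1‖ = (n : ℝ) + 1 := by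
      have : ((n : ℂ) + 1) = ((n + 1 : ℕ) : ℂ) := by push_cast; ring
      rw [this, Complex.norm_natCast]; push_cast; ring
    rw [h1, Real.norm_eq_abs, abs_of_nonneg (hMc0 _)]
  have hdiff : Differentiable ℂ (fun z => ∑' n, Fc n z) := by
    intro z
    have hz : z ∈ Metric.ball (0:ℂ) (‖z‖ + 1) := by
      rw [Metric.mem_ball, dist_zero_right]
      linarith [norm_nonneg z]
    refine DifferentiableOn.differentiableAt
      (Complex.differentiableOn_tsum_of_summable_norm (hu (‖z‖ + 1) (by positivity)) ?_
        Metric.isOpen_ball ?_) (Metric.isOpen_ball.mem_nhds hz)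
    · intro n
      apply DifferentiableOn.const_mul
      apply DifferentiableOn.pow
      apply DifferentiableOn.div_const
      exact differentiableOn_id
    · intro n w hw
      rw [hFc_norm]
      simp only [hudef]
      apply mul_le_mul_of_nonneg_left _ (hMc0 _)
      apply pow_le_pow_left₀ (div_nonneg (norm_nonneg _) (by positivity))
      apply div_le_div_of_nonneg_right ?_ (by positivity)
      · rw [Metric.mem_ball, dist_zero_right] at hw
        linarith
  set μC : ℂ → ℂ := fun z => (Mc 1 : ℂ) + ∑' n, Fc n z with hμCdef
  have hμCdiff : Differentiable ℂ μC := (differentiable_const _).add hdiff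
  have hμCan : AnalyticOnNhd ℂ μC univ :=
    hμCdiff.differentiableOn.analyticOnNhd isOpen_univ
  -- the real function
  set μ : ℝ → ℝ := fun s => Mc 1 + ∑' n, Mc (n + 2) * (s / (n + 1)) ^ (2 * d n) with hμdef
  have hterm_eq : ∀ (s : ℝ) (n : ℕ),
      Mc (n + 2) * (s / (n + 1)) ^ (2 * d n) = u (|s|) n := by
    intro s n
    simp only [hudef]
    congr 1
    rw [div_pow, div_pow, (even_two_mul (d n)).pow_abs]
  have hsum : ∀ s : ℝ, Summable (fun n => Mc (n + 2) * (s / (n + 1)) ^ (2 * d n)) := by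
    intro s
    have := hu (|s|) (abs_nonneg s)
    exact this.congr fun n => (hterm_eq s n).symm
  have hterm_nonneg : ∀ (s : ℝ) (n : ℕ), 0 ≤ Mc (n + 2) * (s / (n + 1)) ^ (2 * d n) :=
    fun s n => mul_nonneg (hMc0 _) ((even_two_mul (d n)).pow_nonneg _)
  have hreal : ∀ s : ℝ, μC (s : ℂ) = ((μ s : ℝ) : ℂ) := by
    intro s
    have hterm : ∀ n : ℕ, Fc n (s : ℂ) = ((Mc (n+2) * (s/((n:ℝ)+1))^(2*d n) : ℝ) : ℂ) := by
      intro n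
      simp only [hFcdef]
      push_cast
      ring
    calc μC ↑s = (Mc 1 : ℂ) + ∑' n, Fc n ↑s := by rw [hμCdef]
      _ = (Mc 1 : ℂ) + ∑' n, ((Mc (n+2) * (s/((n:ℝ)+1))^(2*d n) : ℝ) : ℂ) := by
          rw [tsum_congr hterm]
      _ = ((μ s : ℝ) : ℂ) := by
          rw [hμdef, ← Complex.ofReal_tsum, ← Complex.ofReal_add]
  have hμan : AnalyticOnNhd ℝ μ univ := by
    have h1 : AnalyticOnNhd ℝ (fun s : ℝ => μC (s : ℂ)) univ :=
      (hμCan.restrictScalars).comp (Complex.ofRealCLM.analyticOnNhd univ) (mapsTo_univ _ _)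
    have h2 : AnalyticOnNhd ℝ (fun s : ℝ => Complex.reCLM (μC (s : ℂ))) univ :=
      (Complex.reCLM.analyticOnNhd univ).comp h1 (mapsTo_univ _ _)
    refine h2.congr isOpen_univ fun s _ => ?_
    simp only [Complex.reCLM_apply]
    rw [hreal]
    exact Complex.ofReal_re _
  have hμsmooth : ContDiff ℝ (⊤ : ℕ∞) μ := hμan.contDiff
  have hμ1 : ∀ s, 1 ≤ μ s := by
    intro s
    have h1 : 0 ≤ ∑' n, Mc (n + 2) * (s / (n + 1)) ^ (2 * d n) :=
      tsum_nonneg (hterm_nonneg s)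
    have := hMc1 1
    simp only [hμdef]
    exact this.trans (le_add_of_nonneg_right h1)
  have hmono : MonotoneOn μ (Ici 0) := by
    intro a ha b hb hab
    simp only [hμdef]
    have : ∀ n, Mc (n + 2) * (a / (n + 1)) ^ (2 * d n)
        ≤ Mc (n + 2) * (b / (n + 1)) ^ (2 * d n) := by
      intro n
      apply mul_le_mul_of_nonneg_left _ (hMc0 _)
      apply pow_le_pow_left₀ (div_nonneg ha (by positivity))
      apply div_le_div_of_nonneg_right hab (by positivity)
    exact add_le_add le_rfl ((hsum a).tsum_le_tsum this (hsum b))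
  refine ⟨μ, hμsmooth, hμ1, hmono, ?_⟩
  intro s hs
  refine (hMcM _).trans ?_
  rcases le_or_gt s 1 with hs1 | hs1
  · have hceil : ⌈s⌉₊ ≤ 1 := Nat.ceil_le.mpr (by exact_mod_cast hs1)
    have h1 : Mc ⌈s⌉₊ ≤ Mc 1 := hMcmono hceil
    have h2 : 0 ≤ ∑' n, Mc (n + 2) * (s / (n + 1)) ^ (2 * d n) :=
      tsum_nonneg (hterm_nonneg s)
    simp only [hμdef]
    exact h1.trans (le_add_of_nonneg_right h2)
  · set k := ⌊s⌋₊ with hk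
    have hk1 : 1 ≤ k := Nat.le_floor (by exact_mod_cast hs1.le)
    have hkpos : (0:ℝ) < k := by exact_mod_cast hk1
    have hks : (k : ℝ) ≤ s := Nat.floor_le hs
    set n₀ := k - 1 with hn₀
    have hn₀2 : n₀ + 2 = k + 1 := by omega
    have hn₀1 : ((n₀ : ℝ) + 1) = (k : ℝ) := by
      have : n₀ + 1 = k := by omega
      exact_mod_cast congrArg (Nat.cast (R := ℝ)) this
    have hterm_ge : Mc (k + 1) ≤ Mc (n₀ + 2) * (s / (n₀ + 1)) ^ (2 * d n₀) := by
      rw [hn₀2, hn₀1]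
      have h1 : (1:ℝ) ≤ s / k := (one_le_div hkpos).mpr hks
      have h2 : (1:ℝ) ≤ (s / k) ^ (2 * d n₀) := one_le_pow₀ h1
      have h3 := mul_le_mul_of_nonneg_left h2 (hMc0 (k+1))
      rw [mul_one] at h3
      exact h3
    have hceil : ⌈s⌉₊ ≤ k + 1 := Nat.ceil_le_floor_add_one s
    have h3 : Mc ⌈s⌉₊ ≤ Mc (k + 1) := hMcmono hceil
    have h4 : Mc (n₀ + 2) * (s / (n₀ + 1)) ^ (2 * d n₀)
        ≤ ∑' n, Mc (n + 2) * (s / (n + 1)) ^ (2 * d n) :=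
      Summable.le_tsum (hsum s) n₀ fun j _ => hterm_nonneg s j
    simp only [hμdef]
    exact (h3.trans (hterm_ge.trans h4)).trans
      (le_add_of_nonneg_left (by linarith [hMc1 1]))

/-- existence of an analytic admissible function -/
lemma exists_good_analytic (Ω : Set (Fin N → ℝ)) (hΩ : IsOpen Ω)
    (horth : {x : Fin N → ℝ | ∀ i, 0 ≤ x i} ⊆ Ω) (hne : Ωᶜ.Nonempty) :
    ∃ μ : ℝ → ℝ, ContDiff ℝ (⊤ : ℕ∞) μ ∧ (∀ s, 1 ≤ μ s) ∧ MonotoneOn μ (Ici 0) ∧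
      (∀ s, 0 ≤ s → Good N Ω (μ s) s) := by
  obtain ⟨M, hM⟩ := good_nat Ω hΩ horth hne
  obtain ⟨μ, h1, h2, h3, h4⟩ := exists_entire_dominating M
  refine ⟨μ, h1, h2, h3, fun s hs => ?_⟩
  exact ((hM ⌈s⌉₊).anti_s (Nat.le_ceil s)).mono_c (h4 s hs)

lemma deriv_nonneg_of_monotoneOn {f : ℝ → ℝ} {d s : ℝ} (hs : 0 < s)
    (hf : HasDerivAt f d s) (hm : MonotoneOn f (Ici 0)) : 0 ≤ d := by
  have h := hf.hasDerivWithinAt (s := Ioi s)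
  rw [hasDerivWithinAt_iff_tendsto_slope' (notMem_Ioi.mpr le_rfl)] at h
  refine ge_of_tendsto h ?_
  filter_upwards [self_mem_nhdsWithin] with t ht
  rw [slope_def_field]
  have hst : s < t := ht
  apply div_nonneg _ (by linarith)
  have := hm (mem_Ici.mpr hs.le) (mem_Ici.mpr (hs.trans hst).le) hst.le
  linarith

end Aux

section Psi

variable {N : ℕ} {μ : ℝ → ℝ}

noncomputable def PsiMap (N : ℕ) (μ : ℝ → ℝ) : (Fin N → ℝ) → (Fin N → ℝ) :=
  fun y => μ (Sq N y) • y

lemma contDiff_Psi (hμ : ContDiff ℝ (⊤ : ℕ∞) μ) : ContDiff ℝ (⊤ : ℕ∞) (PsiMap N μ) :=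
  (hμ.comp contDiff_Sq).smul contDiff_id

variable (hμ : ContDiff ℝ (⊤ : ℕ∞) μ) (hμ1 : ∀ s, 1 ≤ μ s) (hmono : MonotoneOn μ (Ici 0))

include hμ1 hmono in
lemma strictMono_F : StrictMonoOn (fun s => μ s ^ 2 * s) (Ici 0) := by
  intro a ha b hb hab
  have h1a := hμ1 a
  have h1b := hμ1 b
  have h3 := hmono ha hb hab.le
  have hsq : μ a ^ 2 ≤ μ b ^ 2 := by nlinarith
  have hb2 : 1 ≤ μ b ^ 2 := by nlinarith
  have ha' : (0:ℝ) ≤ a := ha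
  calc μ a ^ 2 * a ≤ μ b ^ 2 * a := mul_le_mul_of_nonneg_right hsq ha'
    _ < μ b ^ 2 * b := by nlinarith

include hμ1 hmono in
lemma psi_injective : Function.Injective (PsiMap N μ) := by
  intro y y' h
  have hSq : Sq N (PsiMap N μ y) = Sq N (PsiMap N μ y') := by rw [h]
  simp only [PsiMap, Sq_smul] at hSq
  have heq : Sq N y = Sq N y' :=
    (strictMono_F hμ1 hmono).injOn (mem_Ici.mpr (Sq_nonneg y))
      (mem_Ici.mpr (Sq_nonneg y')) hSq
  simp only [PsiMap, heq] at h
  have hne : μ (Sq N y') ≠ 0 := by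
    have := hμ1 (Sq N y'); intro h0; rw [h0] at this; linarith
  exact smul_right_injective (Fin N → ℝ) hne h

include hμ hμ1 in
lemma psi_surjective : Function.Surjective (PsiMap N μ) := by
  intro z
  set h : ℝ → ℝ := fun τ => τ * μ (τ ^ 2 * Sq N z) with hhdef
  have hcont : ContinuousOn h (Icc 0 1) := by
    apply Continuous.continuousOn
    exact continuous_id.mul (hμ.continuous.comp (by continuity))
  have h0 : h 0 = 0 := by simp [hhdef]
  have h1' : 1 ≤ h 1 := by
    have := hμ1 (Sq N z)
    simp only [hhdef, one_pow, one_mul]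
    linarith
  obtain ⟨τ, hτI, hτ⟩ := intermediate_value_Icc zero_le_one hcont
    (mem_Icc.mpr ⟨by linarith, h1'⟩)
  refine ⟨τ • z, ?_⟩
  simp only [PsiMap, Sq_smul, smul_smul]
  have : μ (τ ^ 2 * Sq N z) * τ = 1 := by
    rw [mul_comm]; exact hτ
  rw [this, one_smul]

include hμ hμ1 hmono in
lemma psi_hasFDerivAt_equiv (a : Fin N → ℝ) :
    ∃ e : (Fin N → ℝ) ≃L[ℝ] (Fin N → ℝ),
      HasFDerivAt (PsiMap N μ) (e : (Fin N → ℝ) →L[ℝ] (Fin N → ℝ)) a := by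
  have hdiff : Differentiable ℝ μ := hμ.differentiable (by simp)
  set s₀ := Sq N a with hs₀
  set c₁ := μ s₀ with hc₁
  set c₂ := deriv μ s₀ with hc₂
  set DSa : (Fin N → ℝ) →L[ℝ] ℝ :=
    ∑ i, (a i • (ContinuousLinearMap.proj i : (Fin N → ℝ) →L[ℝ] ℝ)
      + a i • (ContinuousLinearMap.proj i : (Fin N → ℝ) →L[ℝ] ℝ)) with hDSadef
  have hS : HasFDerivAt (Sq N) DSa a := by
    apply HasFDerivAt.fun_sum
    intro i _
    exact ((ContinuousLinearMap.proj i : (Fin N → ℝ) →L[ℝ] ℝ).hasFDerivAt (x := a)).mul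
      ((ContinuousLinearMap.proj i : (Fin N → ℝ) →L[ℝ] ℝ).hasFDerivAt (x := a))
  have hcomp : HasFDerivAt (fun y => μ (Sq N y)) (c₂ • DSa) a :=
    (hdiff.differentiableAt.hasDerivAt (x := s₀)).comp_hasFDerivAt a hS
  set A : (Fin N → ℝ) →L[ℝ] (Fin N → ℝ) :=
    c₁ • ContinuousLinearMap.id ℝ (Fin N → ℝ) + (c₂ • DSa).smulRight a with hAdef
  have hA : HasFDerivAt (PsiMap N μ) A a := hcomp.smul (hasFDerivAt_id a)
  have hc₁1 : 1 ≤ c₁ := hμ1 s₀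
  have hc₂s : 0 ≤ c₂ * s₀ := by
    rcases eq_or_lt_of_le (Sq_nonneg a) with h | h
    · rw [hs₀, ← h]; simp
    · have h' : 0 < s₀ := by rw [hs₀]; exact h
      have : 0 ≤ c₂ :=
        deriv_nonneg_of_monotoneOn h' (hdiff.differentiableAt.hasDerivAt) hmono
      exact mul_nonneg this (hs₀ ▸ Sq_nonneg a)
  have hDSa_apply : ∀ v : Fin N → ℝ, DSa v = 2 * ∑ i, a i * v i := by
    intro v
    simp only [hDSadef, ContinuousLinearMap.coe_sum', Finset.sum_apply,
      ContinuousLinearMap.add_apply, ContinuousLinearMap.coe_smul', Pi.smul_apply,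
      ContinuousLinearMap.proj_apply, smul_eq_mul]
    rw [Finset.mul_sum]
    exact Finset.sum_congr rfl fun i _ => (two_mul _).symm
  have hA_apply : ∀ (v : Fin N → ℝ) (i : Fin N),
      A v i = c₁ * v i + (c₂ * DSa v) * a i := by
    intro v i
    simp only [hAdef, ContinuousLinearMap.add_apply, ContinuousLinearMap.coe_smul',
      Pi.smul_apply, ContinuousLinearMap.coe_id', id_eq, ContinuousLinearMap.smulRight_apply,
      ContinuousLinearMap.coe_smul', smul_eq_mul, Pi.add_apply]
    try ring
  have hinj : Function.Injective A := by
    intro v w hvw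
    have hzero : ∀ i, A (v - w) i = 0 := by
      intro i
      have : A (v - w) = 0 := by rw [map_sub, hvw, sub_self]
      rw [this]; rfl
    set P := ∑ i, a i * (v - w) i with hP
    have hDS : DSa (v - w) = 2 * P := hDSa_apply _
    have hco : ∀ i, c₁ * (v - w) i + (c₂ * (2 * P)) * a i = 0 := by
      intro i
      have := hzero i
      rw [hA_apply, hDS] at this
      exact this
    have hsum0 : (c₁ + 2 * c₂ * s₀) * P = 0 := by
      have h1 : ∑ i, a i * (c₁ * (v - w) i + (c₂ * (2 * P)) * a i) = 0 := by
        simp only [hco, mul_zero, Finset.sum_const_zero]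
      have h2 : ∑ i, a i * (c₁ * (v - w) i + (c₂ * (2 * P)) * a i)
          = c₁ * P + 2 * c₂ * P * s₀ := by
        rw [Finset.sum_congr rfl (fun i _ => by ring :
          ∀ i ∈ Finset.univ, a i * (c₁ * (v - w) i + (c₂ * (2 * P)) * a i)
            = c₁ * (a i * (v - w) i) + 2 * c₂ * P * (a i * a i))]
        rw [Finset.sum_add_distrib, ← Finset.mul_sum, ← Finset.mul_sum]
        rw [hs₀]
        rfl
      rw [h2] at h1
      nlinarith [h1]
    have hPzero : P = 0 := by
      have hcoef : 0 < c₁ + 2 * c₂ * s₀ := by nlinarith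
      rcases mul_eq_zero.mp hsum0 with h | h
      · linarith
      · exact h
    have : ∀ i, (v - w) i = 0 := by
      intro i
      have := hco i
      rw [hPzero] at this
      simp only [mul_zero, zero_mul, add_zero] at this
      rcases mul_eq_zero.mp this with h | h
      · linarith
      · exact h
    have : v - w = 0 := funext this
    exact sub_eq_zero.mp this
  have hsurj : Function.Surjective (A : (Fin N → ℝ) →ₗ[ℝ] (Fin N → ℝ)) :=
    LinearMap.injective_iff_surjective.mp hinj
  let e₀ : (Fin N → ℝ) ≃ₗ[ℝ] (Fin N → ℝ) :=
    LinearEquiv.ofBijective (A : (Fin N → ℝ) →ₗ[ℝ] (Fin N → ℝ)) ⟨hinj, hsurj⟩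
  refine ⟨e₀.toContinuousLinearEquiv, ?_⟩
  have : (e₀.toContinuousLinearEquiv : (Fin N → ℝ) →L[ℝ] (Fin N → ℝ)) = A := by
    ext v
    rfl
  rw [this]
  exact hA

include hμ hμ1 hmono in
lemma contDiff_invFun_psi : ContDiff ℝ (⊤ : ℕ∞) (Function.invFun (PsiMap N μ)) := by
  have hinj := psi_injective (N := N) hμ1 hmono
  have hsurj := psi_surjective (N := N) hμ hμ1
  rw [contDiff_iff_contDiffAt]
  intro z₀
  set a := Function.invFun (PsiMap N μ) z₀ with ha
  have haz : PsiMap N μ a = z₀ := Function.rightInverse_invFun hsurj z₀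
  obtain ⟨e, hA⟩ := psi_hasFDerivAt_equiv hμ hμ1 hmono a
  have hcd : ContDiffAt ℝ (⊤ : ℕ∞) (PsiMap N μ) a := (contDiff_Psi hμ).contDiffAt
  have hlinvcd : ContDiffAt ℝ (⊤ : ℕ∞) (hcd.localInverse hA (by simp)) (PsiMap N μ a) :=
    hcd.to_localInverse hA (by simp)
  have hrinv : ∀ᶠ z in nhds (PsiMap N μ a), PsiMap N μ (hcd.localInverse hA (by simp) z) = z :=
    (hcd.hasStrictFDerivAt' hA (by simp)).eventually_right_inverse
  have heq : Function.invFun (PsiMap N μ) =ᶠ[nhds (PsiMap N μ a)]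
      (hcd.localInverse hA (by simp)) := by
    filter_upwards [hrinv] with z hz
    apply hinj
    rw [Function.rightInverse_invFun hsurj z, hz]
  rw [haz] at hlinvcd heq
  exact hlinvcd.congr_of_eventuallyEq heq

end Psi

/-- For any open neighbourhood `Ω` of the nonnegative orthant
`ℝ^N_{≥0}`, there is an open set `Ω̃` with `ℝ^N_{≥0} ⊆ Ω̃ ⊆ Ω` which is
`C^∞`-diffeomorphic to `ℝ^N`: there are smooth maps `f, g` with `range f = Ω̃`,
`g ∘ f = id` and `f ∘ g = id` on `Ω̃`. -/
theorem exists_open_diffeo_neighbourhood (N : ℕ) (Ω : Set (Fin N → ℝ)) (hΩ : IsOpen Ω)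
    (horth : {x : Fin N → ℝ | ∀ i, 0 ≤ x i} ⊆ Ω) :
    ∃ Ω' : Set (Fin N → ℝ),
      IsOpen Ω' ∧
      {x : Fin N → ℝ | ∀ i, 0 ≤ x i} ⊆ Ω' ∧
      Ω' ⊆ Ω ∧
      ∃ f g : (Fin N → ℝ) → (Fin N → ℝ),
        ContDiff ℝ (⊤ : ℕ∞) f ∧
        ContDiffOn ℝ (⊤ : ℕ∞) g Ω' ∧
        Set.range f = Ω' ∧
        (∀ x, g (f x) = x) ∧
        (∀ y ∈ Ω', f (g y) = y) := by
  by_cases hne : Ωᶜ.Nonempty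
  swap
  · rw [not_nonempty_iff_eq_empty] at hne
    have hΩuniv : Ω = univ := compl_empty_iff.mp hne
    exact ⟨univ, isOpen_univ, subset_univ _, by rw [hΩuniv], id, id, contDiff_id,
      contDiffOn_id, Set.range_id, fun _ => rfl, fun _ _ => rfl⟩
  obtain ⟨μ, hμ, hμ1, hmono, hgood⟩ := exists_good_analytic Ω hΩ horth hne
  set Ψ := PsiMap N μ with hΨdef
  have hinj := psi_injective (N := N) hμ1 hmono
  have hsurj := psi_surjective (N := N) hμ hμ1
  set Φ := Function.invFun Ψ with hΦdef
  have hΦ : ContDiff ℝ (⊤ : ℕ∞) Φ := contDiff_invFun_psi hμ hμ1 hmono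
  have hΨΦ : ∀ z, Ψ (Φ z) = z := fun z => Function.rightInverse_invFun hsurj z
  have hΦΨ : ∀ y, Φ (Ψ y) = y := fun y => Function.leftInverse_invFun hinj y
  have hΨapp : ∀ (y : Fin N → ℝ) (i : Fin N), Ψ y i = μ (Sq N y) * y i := fun y i => rfl
  set B : Set (Fin N → ℝ) := {x | ∀ i, -1 < x i} with hBdef
  have hBopen : IsOpen B := by
    have : B = ⋂ i, (fun x : Fin N → ℝ => x i) ⁻¹' Ioi (-1) := by
      ext x; simp [hBdef, Set.mem_iInter]
    rw [this]
    exact isOpen_iInter_of_finite fun i => (continuous_apply i).isOpen_preimage _ isOpen_Ioi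
  set Ω' : Set (Fin N → ℝ) := Ψ ⁻¹' B with hΩ'def
  have hΩ'open : IsOpen Ω' := hBopen.preimage (contDiff_Psi hμ).continuous
  have hKsub : {x : Fin N → ℝ | ∀ i, 0 ≤ x i} ⊆ Ω' := by
    intro y hy
    intro i
    have h1 : (0:ℝ) ≤ μ (Sq N y) := by linarith [hμ1 (Sq N y)]
    have h2 : (0:ℝ) ≤ μ (Sq N y) * y i := mul_nonneg h1 (hy i)
    rw [hΨapp]
    linarith
  have hΩ'sub : Ω' ⊆ Ω := by
    intro y hy
    by_contra hyΩ
    set c := μ (Sq N y) with hc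
    have hc1 : 1 ≤ c := hμ1 _
    have hc0 : 0 < c := by linarith
    set z : Fin N → ℝ := fun i => max (y i) 0 with hz
    have hzK : ∀ i, 0 ≤ z i := fun i => le_max_right _ _
    have hSz : Sq N z ≤ Sq N y := by
      apply Finset.sum_le_sum
      intro i _
      rcases le_or_gt 0 (y i) with h | h
      · simp only [hz, max_eq_left h, le_refl]
      · simp only [hz, max_eq_right h.le]
        simpa using mul_self_nonneg (y i)
    have hGood : 1 / c ≤ Metric.infDist z Ωᶜ :=
      (hgood (Sq N y) (Sq_nonneg y)).2 z hzK hSz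
    have hdist : dist z y < 1 / c := by
      rw [dist_pi_lt_iff (by positivity)]
      intro i
      rw [Real.dist_eq]
      rcases le_or_gt 0 (y i) with h | h
      · simp only [hz, max_eq_left h, sub_self, abs_zero]
        positivity
      · have hyi : -(1/c) < y i := by
          have h2 : -1 < c * y i := by
            have h4 := hy i
            rw [hΨapp] at h4
            exact h4
          have h3 : c * (1/c) = 1 := mul_one_div_cancel (ne_of_gt hc0)
          nlinarith [h2, h3, hc0]
        simp only [hz, max_eq_right h.le, zero_sub, abs_neg, abs_of_neg h]
        linarith
    have hle : Metric.infDist z Ωᶜ ≤ dist z y := Metric.infDist_le_dist_of_mem hyΩ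
    linarith
  set E : (Fin N → ℝ) → (Fin N → ℝ) := fun x i => Real.exp (x i) - 1 with hEdef
  have hE : ContDiff ℝ (⊤ : ℕ∞) E :=
    contDiff_pi.mpr fun i =>
      (Real.contDiff_exp.comp ((ContinuousLinearMap.proj i :
        (Fin N → ℝ) →L[ℝ] ℝ).contDiff)).sub contDiff_const
  have hEB : ∀ x, E x ∈ B := by
    intro x i
    have := Real.exp_pos (x i)
    simp only [hEdef]
    linarith
  set f : (Fin N → ℝ) → (Fin N → ℝ) := Φ ∘ E with hfdef
  set g : (Fin N → ℝ) → (Fin N → ℝ) := fun y i => Real.log (Ψ y i + 1) with hgdef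
  have hΨpos : ∀ y ∈ Ω', ∀ i, 0 < Ψ y i + 1 := by
    intro y hy i
    have : -1 < Ψ y i := hy i
    linarith
  have hf : ContDiff ℝ (⊤ : ℕ∞) f := hΦ.comp hE
  have hg : ContDiffOn ℝ (⊤ : ℕ∞) g Ω' := by
    apply contDiffOn_pi.mpr
    intro i
    apply ContDiffOn.log
    · exact ((((ContinuousLinearMap.proj i : (Fin N → ℝ) →L[ℝ] ℝ).contDiff.comp
        (contDiff_Psi hμ)).contDiffOn).add contDiffOn_const)
    · intro y hy
      exact ne_of_gt (hΨpos y hy i)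
  have hgf : ∀ x, g (f x) = x := by
    intro x
    funext i
    show Real.log (Ψ (Φ (E x)) i + 1) = x i
    rw [hΨΦ (E x)]
    show Real.log (Real.exp (x i) - 1 + 1) = x i
    rw [sub_add_cancel, Real.log_exp]
  have hfg : ∀ y ∈ Ω', f (g y) = y := by
    intro y hy
    have hEg : E (g y) = Ψ y := by
      funext i
      show Real.exp (Real.log (Ψ y i + 1)) - 1 = Ψ y i
      rw [Real.exp_log (hΨpos y hy i)]
      ring
    show Φ (E (g y)) = y
    rw [hEg, hΦΨ y]
  have hrange : Set.range f = Ω' := by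
    ext w
    constructor
    · rintro ⟨x, rfl⟩
      show Ψ (Φ (E x)) ∈ B
      rw [hΨΦ (E x)]
      exact hEB x
    · intro hw
      exact ⟨g w, hfg w hw⟩
  exact ⟨Ω', hΩ'open, hKsub, hΩ'sub, f, g, hf, hg, hrange, hgf, hfg⟩
end
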